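/- Let $d$ be the signed distance function to the circle of radius $r_0$ in $\mathbb{R}^2$, and let $\delta_\epsilon$ be an integrable kernel supported in $[-\epsilon,\epsilon]$ with $0 < \epsilon < r_0$, $\int \delta_\epsilon = 1$, and $\int \eta\, \delta_\epsilon(\eta)\, d\eta = 0$. Then $\int_{\mathbb{R}^2} \delta_\epsilon(d(\mathbf{x}))\, d\mathbf{x} = 2\pi r_0$, the exact circumference of the circle. -/

import Mathlib

/-! In polar coordinates the integral is `2π ∫_{ρ>0} ρ δ(ρ - r₀) dρ`. Since `ε < r₀`, the kernel
`δ(ρ - r₀)` vanishes for `ρ ≤ 0`, so the substitution `ρ = r₀ + η` turns this into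
`2π (r₀ ∫ δ + ∫ η δ(η)) = 2π r₀`: the vanishing first moment cancels the curvature correction. -/

open MeasureTheory Set Real

theorem integral_fun_norm_euclideanSpace_fin_two {F : Type*} [NormedAddCommGroup F]
    [NormedSpace ℝ F] (f : ℝ → F) :
    ∫ x : EuclideanSpace ℝ (Fin 2), f ‖x‖ = (2 * π) • ∫ y in Ioi (0 : ℝ), y • f y := by
  simp only [integral_fun_norm_addHaar, finrank_euclideanSpace_fin, measureReal_def,
    EuclideanSpace.volume_ball_fin_two, ENNReal.ofReal_one, one_pow, one_mul,
    ENNReal.toReal_ofReal pi_pos.le, Nat.add_one_sub_one, pow_one]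
  rw [← smul_assoc, nsmul_eq_mul, Nat.cast_ofNat]

theorem MeasureTheory.Integrable.id_mul_of_support_subset_Icc {δ : ℝ → ℝ} {a b : ℝ}
    (hint : Integrable δ) (hsupp : Function.support δ ⊆ Icc a b) : Integrable (fun η => η * δ η) := by
  refine (hint.norm.const_mul (max |a| |b|)).mono'
    (aestronglyMeasurable_id.mul hint.aestronglyMeasurable) (.of_forall fun η => ?_)
  rw [norm_mul]
  by_cases hη : δ η = 0
  · simp [hη]
  · exact mul_le_mul_of_nonneg_right
      (abs_le_max_abs_abs (hsupp hη).1 (hsupp hη).2) (norm_nonneg _)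

theorem setIntegral_Ioi_zero_mul_comp_sub {δ : ℝ → ℝ} {r : ℝ}
    (hsupp : Function.support δ ⊆ Ioi (-r)) :
    ∫ y in Ioi (0 : ℝ), y * δ (y - r) = ∫ η, (η + r) * δ η := by
  have hvanish : ∀ y ∉ Ioi (0 : ℝ), y * δ (y - r) = 0 := fun y hy => by
    have : δ (y - r) = 0 := Function.notMem_support.mp fun h => by
      have := hsupp h
      simp only [mem_Ioi, not_lt] at hy this
      linarith
    simp [this]
  rw [setIntegral_eq_integral_of_forall_compl_eq_zero hvanish]
  simpa using integral_sub_right_eq_self (fun η => (η + r) * δ η) r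

theorem circle_integral_exact_general (r₀ ε : ℝ) (hεr : ε < r₀)
    (δ : ℝ → ℝ) (hint : MeasureTheory.Integrable δ)
    (hsupp : Function.support δ ⊆ Set.Icc (-ε) ε)
    (hmass : ∫ η : ℝ, δ η = 1)
    (hmom : ∫ η : ℝ, η * δ η = 0) :
    ∫ x : EuclideanSpace ℝ (Fin 2), δ (‖x‖ - r₀) = 2 * Real.pi * r₀ := by
  have hsupp_Ioi : Function.support δ ⊆ Ioi (-r₀) :=
    hsupp.trans fun η hη => show -r₀ < η by linarith [hη.1]
  calc ∫ x : EuclideanSpace ℝ (Fin 2), δ (‖x‖ - r₀)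
      = 2 * π * ∫ y in Ioi (0 : ℝ), y * δ (y - r₀) :=
        integral_fun_norm_euclideanSpace_fin_two fun y => δ (y - r₀)
    _ = 2 * π * ((∫ η, η * δ η) + r₀ * ∫ η, δ η) := by
        simp_rw [setIntegral_Ioi_zero_mul_comp_sub hsupp_Ioi, add_mul]
        rw [integral_add (hint.id_mul_of_support_subset_Icc hsupp) (hint.const_mul r₀),
          integral_const_mul]
    _ = 2 * π * r₀ := by rw [hmom, hmass, zero_add, mul_one]

/-- For the signed distance function `d(x) = ‖x‖ - r₀` to the circle of radius `r₀` in
`ℝ²` and a kernel `δε` supported in `[-ε,ε] ⊂ (-r₀,r₀)` with unit mass and vanishing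
first moment, `∫_{ℝ²} δε(d(x)) dx = 2π r₀`. -/
theorem circle_integral_exact (r₀ ε : ℝ) (hr : 0 < r₀) (hε : 0 < ε) (hεr : ε < r₀)
    (δ : ℝ → ℝ) (hint : MeasureTheory.Integrable δ)
    (hsupp : Function.support δ ⊆ Set.Icc (-ε) ε)
    (hmass : ∫ η : ℝ, δ η = 1)
    (hmom : ∫ η : ℝ, η * δ η = 0) :
    ∫ x : EuclideanSpace ℝ (Fin 2), δ (‖x‖ - r₀) = 2 * Real.pi * r₀ :=
  circle_integral_exact_general r₀ ε hεr δ hint hsupp hmass hmom
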